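/- Let x_1, ..., x_N be distinct variables and q ≠ 0. Then for every k ≥ 0, (k+1)! · m_k^{(q)}(x_1,...,x_N) = (1/q) Σ_{π ∈ P(k+1)} (-1)^{|π|-1} ∏_{V ∈ π} (|V|-1)! · (p_{|V|}(x_1+q,...,x_N+q) - p_{|V|}(x_1,...,x_N)), where P(k+1) is the set of set partitions of {1,...,k+1}, p_m denotes the m-th power sum, and m_k^{(q)}(x) = Σ_i (∏_{j≠i}(x_i - x_j - q)/(x_i - x_j)) x_i^k. -/

import Mathlib

/-!
Splitting a set partition of `S ∋ a` into the block `V ∋ a` and a partition of `S \ V` shows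
that `∑_π ∏_{V ∈ π} f |V|` depends only on `n = |S|` and satisfies the binomial recursion
`c (n + 1) = ∑_j (n choose j) f (j + 1) c (n - j)`. With `f m = (m - 1)! (p_m(x) - p_m(x + q))`,
the logarithmic derivative of `G(t) = ∏ (1 - (x_i + q) t) / ∏ (1 - x_i t)` shows that
`n! [tⁿ] G` satisfies the same recursion. Lagrange interpolation of the degree `< N` polynomial
`∏ (X - x_i - q) - ∏ (X - x_i)` at the nodes `x_i`, reflected, gives the partial fraction expansion
`G(t) = 1 - q t ∑_i w_i / (1 - x_i t)` with `w_i = ∏_{j ≠ i} (x_i - x_j - q) / (x_i - x_j)`,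
so `[t^{k+1}] G = -q m_k^{(q)}`.
-/

open Finset

section SetPartitions

variable {α : Type*}

open scoped Classical in
noncomputable def setPartitions (S : Finset α) : Finset (Finset (Finset α)) :=
  S.powerset.powerset.filter fun P => ∅ ∉ P ∧ ∀ a ∈ S, ∃! V, V ∈ P ∧ a ∈ V

theorem mem_setPartitions {S : Finset α} {P : Finset (Finset α)} :
    P ∈ setPartitions S ↔ (∀ V ∈ P, V ⊆ S) ∧ ∅ ∉ P ∧ ∀ a ∈ S, ∃! V, V ∈ P ∧ a ∈ V := by
  simp only [setPartitions, mem_filter, mem_powerset, subset_iff (s₂ := S.powerset)]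

theorem setPartitions_empty : setPartitions (∅ : Finset α) = {∅} := by
  ext P
  simp only [mem_setPartitions, subset_empty, mem_singleton, notMem_empty, IsEmpty.forall_iff,
    implies_true, and_true]
  refine ⟨fun ⟨hsub, hne⟩ => eq_empty_of_forall_notMem fun V hV => hne (hsub V hV ▸ hV), ?_⟩
  rintro rfl
  simp

theorem nonempty_of_mem_setPartitions {S : Finset α} {P : Finset (Finset α)} (hS : S.Nonempty)
    (hP : P ∈ setPartitions S) : P.Nonempty := by
  obtain ⟨a, ha⟩ := hS
  obtain ⟨V, ⟨hV, -⟩, -⟩ := (mem_setPartitions.mp hP).2.2 a ha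
  exact ⟨V, hV⟩

theorem notMem_of_mem_setPartitions {T V : Finset α} {P : Finset (Finset α)} {a : α}
    (hP : P ∈ setPartitions T) (haT : a ∉ T) (haV : a ∈ V) : V ∉ P :=
  fun hV => haT ((mem_setPartitions.mp hP).1 V hV haV)

variable [DecidableEq α]

theorem insert_mem_setPartitions {S V : Finset α} {P : Finset (Finset α)} (hVS : V ⊆ S)
    (hV : V.Nonempty) (hP : P ∈ setPartitions (S \ V)) : insert V P ∈ setPartitions S := by
  obtain ⟨hsub, hne, hcov⟩ := mem_setPartitions.mp hP
  refine mem_setPartitions.mpr ⟨?_, ?_, fun b hb => ?_⟩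
  · simp only [mem_insert, forall_eq_or_imp]
    exact ⟨hVS, fun W hW => (hsub W hW).trans sdiff_subset⟩
  · simp only [mem_insert, not_or]
    exact ⟨fun h => hV.ne_empty h.symm, hne⟩
  by_cases hbV : b ∈ V
  · refine ⟨V, ⟨mem_insert_self _ _, hbV⟩, fun W ⟨hW, hbW⟩ => ?_⟩
    rcases mem_insert.mp hW with rfl | hW
    · rfl
    · exact absurd (hsub W hW hbW) (by simp [hbV])
  · obtain ⟨W₀, hW₀, huniq⟩ := hcov b (mem_sdiff.mpr ⟨hb, hbV⟩)
    refine ⟨W₀, ⟨mem_insert_of_mem hW₀.1, hW₀.2⟩, fun W ⟨hW, hbW⟩ => ?_⟩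
    rcases mem_insert.mp hW with rfl | hW
    · exact absurd hbW hbV
    · exact huniq W ⟨hW, hbW⟩

theorem erase_mem_setPartitions {S V : Finset α} {P : Finset (Finset α)}
    (hP : P ∈ setPartitions S) (hV : V ∈ P) : P.erase V ∈ setPartitions (S \ V) := by
  obtain ⟨hsub, hne, hcov⟩ := mem_setPartitions.mp hP
  refine mem_setPartitions.mpr ⟨fun W hW b hbW => ?_, fun h => hne (mem_of_mem_erase h),
    fun b hb => ?_⟩
  · obtain ⟨hWV, hWP⟩ := mem_erase.mp hW
    have hbS := hsub W hWP hbW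
    exact mem_sdiff.mpr ⟨hbS, fun hbV => hWV ((hcov b hbS).unique ⟨hWP, hbW⟩ ⟨hV, hbV⟩)⟩
  · obtain ⟨hbS, hbV⟩ := mem_sdiff.mp hb
    obtain ⟨W₀, ⟨hW₀, hbW₀⟩, huniq⟩ := hcov b hbS
    exact ⟨W₀, ⟨mem_erase.mpr ⟨fun h => hbV (h ▸ hbW₀), hW₀⟩, hbW₀⟩,
      fun W ⟨hW, hbW⟩ => huniq W ⟨mem_of_mem_erase hW, hbW⟩⟩

theorem sdiff_insert_eq_erase_sdiff {S W : Finset α} {a : α} :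
    S \ insert a W = S.erase a \ W := by
  rw [sdiff_insert, erase_sdiff_comm]

theorem sum_setPartitions_eq_sum_powerset {M : Type*} [AddCommMonoid M] {S : Finset α} {a : α}
    (ha : a ∈ S) (g : Finset (Finset α) → M) :
    ∑ P ∈ setPartitions S, g P =
      ∑ W ∈ (S.erase a).powerset, ∑ P ∈ setPartitions (S.erase a \ W),
        g (insert (insert a W) P) := by
  rw [sum_sigma']
  have hblock : ∀ P ∈ setPartitions S, ∃! V, V ∈ P ∧ a ∈ V :=
    fun P hP => (mem_setPartitions.mp hP).2.2 a ha
  have hreassemble : ∀ P (hP : P ∈ setPartitions S),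
      insert (insert a ((P.choose (a ∈ ·) (hblock P hP)).erase a))
        (P.erase (P.choose (a ∈ ·) (hblock P hP))) = P := fun P hP => by
    rw [insert_erase (choose_property _ _ (hblock P hP)),
      insert_erase (choose_mem _ _ (hblock P hP))]
  refine sum_bij' (fun P hP => ⟨(P.choose (a ∈ ·) (hblock P hP)).erase a,
      P.erase (P.choose (a ∈ ·) (hblock P hP))⟩)
    (fun (p : (_ : Finset α) × Finset (Finset α)) _ => insert (insert a p.1) p.2) ?_ ?_ ?_ ?_ ?_
  · intro P hP
    set V := P.choose (a ∈ ·) (hblock P hP)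
    have hVP : V ∈ P := choose_mem _ _ _
    have haV : a ∈ V := choose_property _ _ (hblock P hP)
    have hsdiff : S \ V = S.erase a \ V.erase a := by
      conv_lhs => rw [← insert_erase haV]
      exact sdiff_insert_eq_erase_sdiff
    simp only [mem_sigma, mem_powerset]
    exact ⟨erase_subset_erase a ((mem_setPartitions.mp hP).1 V hVP),
      hsdiff ▸ erase_mem_setPartitions hP hVP⟩
  · rintro ⟨W, P⟩ hWP
    simp only [mem_sigma, mem_powerset] at hWP
    exact insert_mem_setPartitions (insert_subset ha (hWP.1.trans (erase_subset a S)))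
      (insert_nonempty a W) (by rw [sdiff_insert_eq_erase_sdiff]; exact hWP.2)
  · exact hreassemble
  · rintro ⟨W, P⟩ hWP
    simp only [mem_sigma, mem_powerset] at hWP
    obtain ⟨hW, hP⟩ := hWP
    have haW : a ∉ W := fun h => notMem_erase a S (hW h)
    have hVP : insert a W ∉ P := notMem_of_mem_setPartitions hP
      (fun h => notMem_erase a S (mem_sdiff.mp h).1) (mem_insert_self a W)
    have hchoose : ∀ h, (insert (insert a W) P).choose (a ∈ ·) h = insert a W := fun h =>
      h.unique ⟨choose_mem _ _ h, choose_property _ _ h⟩ ⟨mem_insert_self _ _, mem_insert_self _ _⟩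
    refine Sigma.ext ?_ (heq_of_eq ?_)
    · simp only [hchoose, erase_insert haW]
    · simp only [hchoose, erase_insert hVP]
  · exact fun P hP => by rw [hreassemble P hP]

end SetPartitions

theorem sum_setPartitions_prod_eq {α R : Type*} [CommSemiring R] (f c : ℕ → R) (hc₀ : c 0 = 1)
    (hc : ∀ n, c (n + 1) = ∑ j ∈ range (n + 1), n.choose j * (f (j + 1) * c (n - j)))
    (S : Finset α) : ∑ P ∈ setPartitions S, ∏ V ∈ P, f #V = c #S := by
  classical
  induction S using Finset.strongInduction with
  | H S ih =>
  obtain rfl | ⟨a, ha⟩ := S.eq_empty_or_nonempty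
  · simp [setPartitions_empty, hc₀]
  have hblocks : ∀ W ∈ (S.erase a).powerset,
      ∑ P ∈ setPartitions (S.erase a \ W), ∏ V ∈ insert (insert a W) P, f #V =
        f (#W + 1) * c (#(S.erase a) - #W) := by
    intro W hW
    rw [mem_powerset] at hW
    have haW : a ∉ W := fun h => notMem_erase a S (hW h)
    calc ∑ P ∈ setPartitions (S.erase a \ W), ∏ V ∈ insert (insert a W) P, f #V
        = ∑ P ∈ setPartitions (S.erase a \ W), f (#W + 1) * ∏ V ∈ P, f #V := by
          refine sum_congr rfl fun P hP => ?_
          rw [prod_insert (notMem_of_mem_setPartitions hP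
            (fun h => notMem_erase a S (mem_sdiff.mp h).1) (mem_insert_self a W)), card_insert_of_notMem haW]
      _ = f (#W + 1) * c (#(S.erase a) - #W) := by
          rw [← mul_sum, ih _ (sdiff_subset.trans_ssubset (erase_ssubset ha)),
            card_sdiff_of_subset hW]
  rw [sum_setPartitions_eq_sum_powerset ha, sum_congr rfl hblocks,
    sum_powerset_apply_card (fun m => f (m + 1) * c (#(S.erase a) - m)),
    ← card_erase_add_one ha, hc]
  simp only [nsmul_eq_mul]

theorem Derivation.map_prod_of_map_eq_mul {R A ι : Type*} [CommSemiring R] [CommRing A]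
    [Algebra R A] (D : Derivation R A A) (s : Finset ι) (w l : ι → A)
    (h : ∀ i ∈ s, D (w i) = l i * w i) : D (∏ i ∈ s, w i) = (∑ i ∈ s, l i) * ∏ i ∈ s, w i := by
  classical
  induction s using Finset.induction_on with
  | empty => simp
  | insert b s hb ih =>
    rw [prod_insert hb, sum_insert hb, D.leibniz, ih fun i hi => h i (mem_insert_of_mem hi),
      h b (mem_insert_self b s), smul_eq_mul, smul_eq_mul]
    ring

section NodalRatio

open PowerSeries

variable {R : Type*} [CommRing R]

noncomputable def geomSeries (a : R) : R⟦X⟧ := rescale a (mk 1)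

@[simp]
theorem coeff_geomSeries (a : R) (n : ℕ) : coeff n (geomSeries a) = a ^ n := by
  simp [geomSeries, coeff_rescale]

theorem geomSeries_mul_one_sub (a : R) : geomSeries a * (1 - C a * X) = 1 := by
  have h := congrArg (rescale a) (mk_one_mul_one_sub_eq_one R)
  rwa [map_mul, map_sub, map_one, rescale_X] at h

theorem prod_one_sub_mul_prod_geomSeries {ι : Type*} (s : Finset ι) (a : ι → R) :
    (∏ i ∈ s, (1 - C (a i) * X)) * ∏ i ∈ s, geomSeries (a i) = 1 := by
  rw [← prod_mul_distrib]
  exact prod_eq_one fun i _ => by rw [mul_comm, geomSeries_mul_one_sub]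

theorem prod_erase_one_sub_mul_prod_geomSeries {ι : Type*} [DecidableEq ι] {s : Finset ι}
    {i : ι} (hi : i ∈ s) (a : ι → R) :
    (∏ j ∈ s.erase i, (1 - C (a j) * X)) * ∏ j ∈ s, geomSeries (a j) = geomSeries (a i) := by
  rw [← mul_prod_erase s _ hi, mul_left_comm, prod_one_sub_mul_prod_geomSeries, mul_one]

theorem derivative_geomSeries (a : R) :
    d⁄dX R (geomSeries a) = C a * geomSeries a * geomSeries a := by
  have h := congrArg (d⁄dX R) (geomSeries_mul_one_sub a)
  simp only [Derivation.leibniz, map_sub, derivative_C, Derivation.map_one_eq_zero,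
    derivative_X, smul_eq_mul] at h
  linear_combination geomSeries a * h - d⁄dX R (geomSeries a) * geomSeries_mul_one_sub a

variable {ι : Type*} [Fintype ι]

noncomputable def nodalRatio (a b : ι → R) : R⟦X⟧ :=
  (∏ i, (1 - C (b i) * X)) * ∏ i, geomSeries (a i)

theorem coeff_zero_nodalRatio (a b : ι → R) : coeff 0 (nodalRatio a b) = 1 := by
  have hgeom (c : R) : constantCoeff (geomSeries c) = 1 := by
    rw [← coeff_zero_eq_constantCoeff_apply, coeff_geomSeries, pow_zero]
  simp [nodalRatio, coeff_zero_eq_constantCoeff_apply, map_prod, hgeom]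

theorem derivative_nodalRatio (a b : ι → R) :
    d⁄dX R (nodalRatio a b) =
      (∑ i, (C (a i) * geomSeries (a i) - C (b i) * geomSeries (b i))) * nodalRatio a b := by
  have hb : d⁄dX R (∏ i, (1 - C (b i) * X)) =
      (∑ i, -(C (b i) * geomSeries (b i))) * ∏ i, (1 - C (b i) * X) :=
    Derivation.map_prod_of_map_eq_mul _ _ _ _ fun i _ => by
      simp only [map_sub, Derivation.map_one_eq_zero, Derivation.leibniz, derivative_C,
        derivative_X, smul_eq_mul]
      linear_combination C (b i) * geomSeries_mul_one_sub (b i)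
  have ha : d⁄dX R (∏ i, geomSeries (a i)) =
      (∑ i, C (a i) * geomSeries (a i)) * ∏ i, geomSeries (a i) :=
    Derivation.map_prod_of_map_eq_mul _ _ _ _ fun i _ => derivative_geomSeries (a i)
  rw [nodalRatio, Derivation.leibniz, ha, hb, sum_sub_distrib, sum_neg_distrib, smul_eq_mul,
    smul_eq_mul]
  ring

theorem coeff_succ_nodalRatio_mul (a b : ι → R) (n : ℕ) :
    coeff (n + 1) (nodalRatio a b) * (n + 1) =
      ∑ j ∈ range (n + 1), (∑ i, (a i ^ (j + 1) - b i ^ (j + 1))) *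
        coeff (n - j) (nodalRatio a b) := by
  rw [← coeff_derivative, derivative_nodalRatio, coeff_mul,
    Nat.sum_antidiagonal_eq_sum_range_succ_mk]
  simp [map_sum, pow_succ']

theorem factorial_mul_coeff_nodalRatio_succ (a b : ι → R) (n : ℕ) :
    ((n + 1).factorial : R) * coeff (n + 1) (nodalRatio a b) =
      ∑ j ∈ range (n + 1),
        n.choose j * ((j.factorial : R) * ∑ i, (a i ^ (j + 1) - b i ^ (j + 1))) *
          ((n - j).factorial * coeff (n - j) (nodalRatio a b)) := by
  have hchoose : ∀ j ∈ range (n + 1),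
      (n.choose j * j.factorial * (n - j).factorial : R) = n.factorial := fun j hj => by
    rw [← Nat.cast_mul, ← Nat.cast_mul,
      Nat.choose_mul_factorial_mul_factorial (Nat.lt_succ_iff.mp (mem_range.mp hj))]
  calc ((n + 1).factorial : R) * coeff (n + 1) (nodalRatio a b)
      = n.factorial * (coeff (n + 1) (nodalRatio a b) * (n + 1)) := by
        push_cast [Nat.factorial_succ]
        ring
    _ = _ := by
        rw [coeff_succ_nodalRatio_mul, mul_sum]
        refine sum_congr rfl fun j hj => ?_
        rw [← hchoose j hj]
        ring

theorem sum_setPartitions_prod_eq_factorial_mul_coeff_nodalRatio {α : Type*} (a b : ι → R)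
    (S : Finset α) :
    ∑ P ∈ setPartitions S, ∏ V ∈ P, ((#V - 1).factorial * ∑ i, (a i ^ #V - b i ^ #V) : R) =
      (#S).factorial * coeff #S (nodalRatio a b) :=
  sum_setPartitions_prod_eq (fun m => (m - 1).factorial * ∑ i, (a i ^ m - b i ^ m))
    (fun n => n.factorial * coeff n (nodalRatio a b)) (by simp [coeff_zero_nodalRatio])
    (fun n => by simp only [factorial_mul_coeff_nodalRatio_succ, Nat.add_sub_cancel, mul_assoc]) S

end NodalRatio

section Lagrange

open Polynomial Lagrange

theorem Polynomial.reflect_sum {R ι : Type*} [Semiring R] (s : Finset ι) (f : ι → R[X]) (N : ℕ) :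
    reflect N (∑ i ∈ s, f i) = ∑ i ∈ s, reflect N (f i) :=
  map_sum (AddMonoidHom.mk ⟨reflect N, reflect_zero⟩ fun f g => reflect_add f g N) f s

variable {R ι : Type*} [CommRing R]

theorem natDegree_nodal_le (s : Finset ι) (v : ι → R) : (nodal s v).natDegree ≤ #s :=
  (natDegree_prod_le _ _).trans
    (by simpa using sum_le_card_nsmul s _ 1 fun i _ => natDegree_X_sub_C_le (v i))

theorem reflect_nodal (s : Finset ι) (v : ι → R) :
    reflect #s (nodal s v) = ∏ i ∈ s, (1 - C (v i) * X) := by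
  classical
  induction s using Finset.induction_on with
  | empty => simp [nodal_empty, reflect_one]
  | insert b s hb ih =>
    rw [nodal_insert_eq_nodal hb, card_insert_of_notMem hb, add_comm,
      reflect_mul _ _ (natDegree_X_sub_C_le _) (natDegree_nodal_le s v), ih,
      prod_insert hb, reflect_sub, reflect_one_X, reflect_C, pow_one]

theorem reflect_succ_nodal (s : Finset ι) (v : ι → R) :
    reflect (#s + 1) (nodal s v) = X * ∏ i ∈ s, (1 - C (v i) * X) := by
  rw [add_comm, ← one_mul (nodal s v),
    reflect_mul _ _ (natDegree_one.trans_le zero_le_one) (natDegree_nodal_le s v), reflect_one,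
    pow_one, reflect_nodal]

variable {K : Type*} [Field K] [Fintype ι] [DecidableEq ι]

def shiftWeight (x : ι → K) (q : K) (i : ι) : K :=
  ∏ j ∈ univ.erase i, (x i - x j - q) / (x i - x j)

theorem nodal_add_sub_nodal {x : ι → K} (hx : Function.Injective x) (q : K) :
    nodal univ (fun i => x i + q) - nodal univ x =
      ∑ i, C (-q * shiftWeight x q i) * nodal (univ.erase i) x := by
  have hdeg : (nodal univ (fun i => x i + q) - nodal univ x).degree < #(univ : Finset ι) := by
    rw [← degree_nodal (v := fun i => x i + q)]
    exact degree_sub_lt_left (degree_nodal.trans degree_nodal.symm) nodal_ne_zero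
      (by rw [nodal_monic.leadingCoeff, nodal_monic.leadingCoeff])
  rw [eq_interpolate hx.injOn hdeg, interpolate_apply]
  refine sum_congr rfl fun i _ => ?_
  rw [basis_eq_prod_sub_inv_mul_nodal_div (mem_univ i), ← nodal_erase_eq_nodal_div (mem_univ i),
    ← mul_assoc, ← C_mul]
  congr 2
  rw [eval_sub, eval_nodal_at_node (mem_univ i), sub_zero, eval_nodal,
    ← mul_prod_erase _ _ (mem_univ i), nodalWeight, shiftWeight, mul_assoc, ← prod_mul_distrib]
  simp only [div_eq_mul_inv, sub_add_eq_sub_sub, sub_self, zero_sub]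

theorem prod_one_sub_add_sub_prod_one_sub {x : ι → K} (hx : Function.Injective x) (q : K) :
    ∏ i, (1 - C (x i + q) * X) - ∏ i, (1 - C (x i) * X) =
      ∑ i, C (-q * shiftWeight x q i) * (X * ∏ j ∈ univ.erase i, (1 - C (x j) * X)) := by
  have h := congrArg (reflect (Fintype.card ι)) (nodal_add_sub_nodal hx q)
  rw [reflect_sub, reflect_sum, ← card_univ, reflect_nodal, reflect_nodal] at h
  rw [h]
  refine sum_congr rfl fun i _ => ?_
  rw [reflect_C_mul, ← card_erase_add_one (mem_univ i), reflect_succ_nodal]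

theorem coeff_succ_nodalRatio_add {x : ι → K} (hx : Function.Injective x) (q : K) (n : ℕ) :
    PowerSeries.coeff (n + 1) (nodalRatio x fun i => x i + q) =
      -(q * ∑ i, shiftWeight x q i * x i ^ n) := by
  have h := congrArg (coeToPowerSeries.ringHom (R := K)) (prod_one_sub_add_sub_prod_one_sub hx q)
  simp only [map_sub, map_prod, map_sum, map_mul, map_neg, map_one, coeToPowerSeries.ringHom_apply,
    coe_C, coe_X] at h
  have hratio : nodalRatio x (fun i => x i + q) = 1 - PowerSeries.C q *
      (PowerSeries.X * ∑ i, PowerSeries.C (shiftWeight x q i) * geomSeries (x i)) := by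
    rw [nodalRatio, ← sub_add_cancel (∏ i, (1 - PowerSeries.C (x i + q) * PowerSeries.X))
      (∏ i, (1 - PowerSeries.C (x i) * PowerSeries.X)), h, add_mul, sum_mul,
      prod_one_sub_mul_prod_geomSeries, mul_sum, mul_sum, sub_eq_neg_add, ← sum_neg_distrib]
    congr 1
    refine sum_congr rfl fun i _ => ?_
    linear_combination (-PowerSeries.C q * PowerSeries.C (shiftWeight x q i) * PowerSeries.X) *
      prod_erase_one_sub_mul_prod_geomSeries (mem_univ i) x
  simp [hratio, PowerSeries.coeff_one, map_sum, mul_sum]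

end Lagrange

theorem neg_one_pow_card_sub_one_mul_prod {ι R : Type*} [CommRing R] {s : Finset ι}
    (hs : s.Nonempty) (f : ι → R) : (-1) ^ (#s - 1) * ∏ i ∈ s, f i = -∏ i ∈ s, -f i := by
  obtain ⟨n, hn⟩ := Nat.exists_eq_succ_of_ne_zero hs.card_pos.ne'
  rw [prod_neg, hn, pow_succ, Nat.succ_sub_one]
  ring

open scoped Classical in
/-- Set-partition expansion:
`(k+1)! m_k^{(q)}(x) = (1/q) Σ_{π ∈ P(k+1)} (-1)^{|π|-1} ∏_{V ∈ π} (|V|-1)!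
  (p_{|V|}(x+q) - p_{|V|}(x))`,
where `P(k+1)` is the set of set partitions of `{1,…,k+1}`. -/
theorem qPP_partition_expansion (N : ℕ) (x : Fin N → ℝ) (hx : Function.Injective x)
    (q : ℝ) (hq : q ≠ 0) (k : ℕ) :
    ((k + 1).factorial : ℝ) *
      ∑ i, (∏ j ∈ Finset.univ.erase i, (x i - x j - q) / (x i - x j)) * x i ^ k =
    (1 / q) *
      ∑ P ∈ (Finset.univ : Finset (Fin (k + 1))).powerset.powerset.filter
          (fun P => (∅ ∉ P) ∧ ∀ a : Fin (k + 1), ∃! V, V ∈ P ∧ a ∈ V),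
        (-1 : ℝ) ^ (P.card - 1) *
          ∏ V ∈ P, ((V.card - 1).factorial : ℝ) *
            ((∑ i, (x i + q) ^ V.card) - ∑ i, x i ^ V.card) := by
  have hpartitions : (univ : Finset (Fin (k + 1))).powerset.powerset.filter
      (fun P => ∅ ∉ P ∧ ∀ a : Fin (k + 1), ∃! V, V ∈ P ∧ a ∈ V) = setPartitions univ := by
    simp [setPartitions]
  have hsign : ∀ P ∈ setPartitions (univ : Finset (Fin (k + 1))),
      (-1 : ℝ) ^ (#P - 1) * ∏ V ∈ P, ((#V - 1).factorial : ℝ) *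
        ((∑ i, (x i + q) ^ #V) - ∑ i, x i ^ #V) =
      -∏ V ∈ P, ((#V - 1).factorial * ∑ i, (x i ^ #V - (x i + q) ^ #V)) := fun P hP => by
    rw [neg_one_pow_card_sub_one_mul_prod (nonempty_of_mem_setPartitions univ_nonempty hP)]
    simp only [sum_sub_distrib, ← mul_neg, neg_sub]
  rw [hpartitions, sum_congr rfl hsign, sum_neg_distrib,
    sum_setPartitions_prod_eq_factorial_mul_coeff_nodalRatio, card_univ, Fintype.card_fin,
    coeff_succ_nodalRatio_add hx]
  unfold shiftWeight
  field_simp
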